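/- arXiv:2412.01936 — 2 statements merged into one kernel-verified Lean document; each statement's English description precedes it below -/
import Mathlib

section
/- A convex quadratic function that is bounded below on an affine subspace of R^n attains its minimum on that subspace. -/
/-!
A linear functional `φ` bounded below along a line where the form `B` degenerates must vanish
there, so `φ` annihilates `ker B`; for a symmetric form this annihilator is the range of `B`,
hence `φ = B w`, and completing the square shows that `-w/2` minimizes `x ↦ B x x + φ x`.
On an affine subspace `x₀ + W` the objective is, up to a constant, a function of the same kind
on `W`.
-/

open Matrix Module
open LinearMap (BilinForm)

namespace LinearMap.BilinForm

theorem IsSymm.apply_add_add_apply_add {R M : Type*} [CommSemiring R] [AddCommMonoid M]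
    [Module R M] {B : BilinForm R M} (hB : B.IsSymm) (φ : Dual R M) (x y : M) :
    B (x + y) (x + y) + φ (x + y) = B x x + φ x + (B y y + (2 • B x + φ) y) := by
  simp only [map_add, LinearMap.add_apply, hB.eq y x, two_smul]
  ring

variable {𝕜 V : Type*} [Field 𝕜] [LinearOrder 𝕜] [IsStrictOrderedRing 𝕜]
  [AddCommGroup V] [Module 𝕜 V]

theorem apply_eq_zero_of_bddBelow_add {B : BilinForm 𝕜 V} {φ : Dual 𝕜 V}
    (hbdd : BddBelow (Set.range fun x ↦ B x x + φ x)) {u : V} (hu : B u = 0) : φ u = 0 := by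
  obtain ⟨L, hL⟩ := hbdd
  by_contra hφu
  have hlow := hL ⟨((L - 1) / φ u) • u, rfl⟩
  simp only [map_smul, hu, LinearMap.zero_apply, smul_zero, smul_eq_mul,
    div_mul_cancel₀ _ hφu] at hlow
  linarith

theorem mem_range_of_bddBelow_add [FiniteDimensional 𝕜 V] {B : BilinForm 𝕜 V} (hB : B.IsSymm)
    {φ : Dual 𝕜 V} (hbdd : BddBelow (Set.range fun x ↦ B x x + φ x)) :
    φ ∈ LinearMap.range B := by
  rw [isSymm_iff_eq_flip.mp (isSymm_iff.mp hB), ← dualAnnihilator_ker_eq_range_flip]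
  exact (Submodule.mem_dualAnnihilator φ).mpr fun u hu ↦ apply_eq_zero_of_bddBelow_add hbdd hu

theorem exists_forall_le_of_bddBelow_add [FiniteDimensional 𝕜 V] {B : BilinForm 𝕜 V}
    (hB : B.IsSymm) (hB₀ : ∀ x, 0 ≤ B x x) {φ : Dual 𝕜 V}
    (hbdd : BddBelow (Set.range fun x ↦ B x x + φ x)) :
    ∃ v, ∀ x, B v v + φ v ≤ B x x + φ x := by
  obtain ⟨w, rfl⟩ := mem_range_of_bddBelow_add hB hbdd
  refine ⟨-(2⁻¹ : 𝕜) • w, fun x ↦ ?_⟩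
  have hsquare := hB₀ (x + (2⁻¹ : 𝕜) • w)
  simp only [map_add, map_smul, LinearMap.add_apply, LinearMap.smul_apply, smul_eq_mul,
    hB.eq x w] at hsquare ⊢
  linarith

theorem exists_forall_le_of_bddBelow_on_coset [FiniteDimensional 𝕜 V] {B : BilinForm 𝕜 V}
    (hB : B.IsSymm) (hB₀ : ∀ x, 0 ≤ B x x) (φ : Dual 𝕜 V) (x₀ : V) (W : Submodule 𝕜 V)
    (hbdd : ∃ L, ∀ x, x - x₀ ∈ W → L ≤ B x x + φ x) :
    ∃ v, v - x₀ ∈ W ∧ ∀ x, x - x₀ ∈ W → B v v + φ v ≤ B x x + φ x := by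
  obtain ⟨L, hL⟩ := hbdd
  have hbddW : BddBelow (Set.range fun w : W ↦
      B.restrict W w w + (2 • B x₀ + φ).domRestrict W w) := by
    refine ⟨L - (B x₀ x₀ + φ x₀), ?_⟩
    rintro _ ⟨w, rfl⟩
    have hw := hL (x₀ + w) (by simp)
    rw [hB.apply_add_add_apply_add] at hw
    simp only [restrict_apply, LinearMap.domRestrict_apply]
    linarith
  obtain ⟨v, hv⟩ := exists_forall_le_of_bddBelow_add (hB.restrict W) (fun w ↦ hB₀ w) hbddW
  refine ⟨x₀ + v, by simp, fun x hx ↦ ?_⟩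
  have hvx := hv ⟨x - x₀, hx⟩
  simp only [restrict_apply, LinearMap.domRestrict_apply] at hvx
  rw [← add_sub_cancel x₀ x, hB.apply_add_add_apply_add, hB.apply_add_add_apply_add]
  linarith

end LinearMap.BilinForm

/-- A convex quadratic function that is bounded below on a nonempty affine subspace
`{x : A x = b}` of `ℝⁿ` attains its minimum on that subspace. -/
theorem quadratic_bddBelow_attains_min {n m : ℕ}
    (Q : Matrix (Fin n) (Fin n) ℝ) (hQ : Q.PosSemidef)
    (c : Fin n → ℝ) (A : Matrix (Fin m) (Fin n) ℝ) (b : Fin m → ℝ)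
    (hS : ∃ x : Fin n → ℝ, A *ᵥ x = b)
    (hbdd : ∃ L : ℝ, ∀ x : Fin n → ℝ, A *ᵥ x = b →
      L ≤ (1 / 2) * (x ⬝ᵥ (Q *ᵥ x)) + c ⬝ᵥ x) :
    ∃ xstar : Fin n → ℝ, A *ᵥ xstar = b ∧
      ∀ x : Fin n → ℝ, A *ᵥ x = b →
        (1 / 2) * (xstar ⬝ᵥ (Q *ᵥ xstar)) + c ⬝ᵥ xstar
          ≤ (1 / 2) * (x ⬝ᵥ (Q *ᵥ x)) + c ⬝ᵥ x := by
  obtain ⟨x₀, hx₀⟩ := hS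
  have hsol : ∀ x, A *ᵥ x = b ↔ x - x₀ ∈ LinearMap.ker A.mulVecLin := by
    simp [mulVec_sub, hx₀, sub_eq_zero]
  let B : BilinForm ℝ (Fin n → ℝ) := (2⁻¹ : ℝ) • Q.toBilin'
  have hf : ∀ x, (1 / 2) * (x ⬝ᵥ (Q *ᵥ x)) + c ⬝ᵥ x = B x x + dotProductBilin ℝ ℝ c x := by
    simp [B, toBilin'_apply']
  have hB : B.IsSymm :=
    (isSymm_toBilin'_iff_isSymm.mpr (isHermitian_iff_isSymm.mp hQ.1)).smul _
  have hB₀ : ∀ x, 0 ≤ B x x := fun x ↦ by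
    simpa [B, toBilin'_apply'] using hQ.dotProduct_mulVec_nonneg x
  simp only [hsol, hf] at hbdd ⊢
  exact LinearMap.BilinForm.exists_forall_le_of_bddBelow_on_coset hB hB₀ _ x₀ _ hbdd
end

section
/- In the unconstrained reformulation of the least-squares imbalanced Universum QTSVM for the minority class, any optimal solution (z*, c*) with z* = 0 implies the vectors S_A e, S_B̃ e, and S_Û e are linearly dependent; equivalently, if these three vectors are linearly independent, then z* ≠ 0. -/
/-! Along every ray `t ↦ (t • v, c*)` through an optimum with `z* = 0` the
objective is a quadratic in `t` whose linear coefficient is `⟪g, v⟫`, where `g` is the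
`z`-gradient at `(0, c*)`; minimality kills that coefficient, so `g = 0`. But
`g = c* S_A e + C₁ (1 + c*) S_B̃ e + C_u (c* + 1 - ε) S_Û e`, and linear independence
forces `c* = 0` and then `C₁ = 0`. -/

open Matrix

/-- Objective of the unconstrained minority-class reformulation
`Im-LS-𝔘-QTSVM-1` of the least-squares imbalanced Universum QTSVM. -/
noncomputable def minorityObj {d mA mB mU k : ℕ}
    (SA : Matrix (Fin d) (Fin mA) ℝ) (SB : Matrix (Fin d) (Fin mB) ℝ)
    (SU : Matrix (Fin d) (Fin mU) ℝ) (V : Matrix (Fin k) (Fin d) ℝ)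
    (C1 Cu lam eps : ℝ) (z : Fin d → ℝ) (c : ℝ) : ℝ :=
  (1 / 2) * ((SAᵀ *ᵥ z + fun _ => c) ⬝ᵥ (SAᵀ *ᵥ z + fun _ => c))
    + (C1 / 2) * (((fun _ => 1) + SBᵀ *ᵥ z + fun _ => c) ⬝ᵥ
        ((fun _ => 1) + SBᵀ *ᵥ z + fun _ => c))
    + (Cu / 2) * (((fun _ => -1 + eps) - (SUᵀ *ᵥ z + fun _ => c)) ⬝ᵥ
        ((fun _ => -1 + eps) - (SUᵀ *ᵥ z + fun _ => c)))
    + (lam / 2) * ((V *ᵥ z) ⬝ᵥ (V *ᵥ z))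

theorem eq_zero_of_forall_nonneg_mul_add_sq {a b : ℝ} (h : ∀ t : ℝ, 0 ≤ b * t + a * t ^ 2) :
    b = 0 := by
  have hdiscr := discrim_le_zero (a := a) (b := b) (c := 0) fun t => by linarith [h t]
  rw [discrim, mul_zero, sub_zero] at hdiscr
  exact pow_eq_zero_iff two_ne_zero |>.mp (le_antisymm hdiscr (sq_nonneg b))

section Expansion

variable {R m n : Type*} [CommRing R] [Fintype n]

theorem dotProduct_self_add_smul (w p : n → R) (t : R) :
    (w + t • p) ⬝ᵥ (w + t • p) = w ⬝ᵥ w + t * (2 * (w ⬝ᵥ p)) + t ^ 2 * (p ⬝ᵥ p) := by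
  simp only [add_dotProduct, dotProduct_add, smul_dotProduct, dotProduct_smul, smul_eq_mul,
    dotProduct_comm p w]
  ring

theorem dotProduct_self_add_transpose_mulVec_smul [Fintype m] (A : Matrix m n R) (w : n → R)
    (v : m → R) (t : R) :
    (w + Aᵀ *ᵥ (t • v)) ⬝ᵥ (w + Aᵀ *ᵥ (t • v)) =
      w ⬝ᵥ w + t * (2 * ((A *ᵥ w) ⬝ᵥ v)) + t ^ 2 * ((Aᵀ *ᵥ v) ⬝ᵥ (Aᵀ *ᵥ v)) := by
  rw [mulVec_smul, dotProduct_self_add_smul, dotProduct_mulVec, vecMul_transpose]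

theorem mulVec_const (A : Matrix m n R) (c : R) : A *ᵥ (fun _ => c) = c • A *ᵥ fun _ => 1 := by
  rw [← mulVec_smul]
  congr
  funext
  simp

end Expansion

section Minority

variable {d mA mB mU k : ℕ}
  (SA : Matrix (Fin d) (Fin mA) ℝ) (SB : Matrix (Fin d) (Fin mB) ℝ)
  (SU : Matrix (Fin d) (Fin mU) ℝ) (V : Matrix (Fin k) (Fin d) ℝ) (C1 Cu lam eps : ℝ)

/-- The `z`-gradient of `minorityObj` at `(0, c)`. -/
noncomputable def minorityGradAtZero (c : ℝ) : Fin d → ℝ :=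
  SA *ᵥ (fun _ => c) + C1 • (SB *ᵥ fun _ => 1 + c) + Cu • ((-SU) *ᵥ fun _ => -1 + eps - c)

theorem minorityObj_eq_const_add_mulVec (z : Fin d → ℝ) (c : ℝ) :
    minorityObj SA SB SU V C1 Cu lam eps z c =
      (1 / 2) * (((fun _ => c) + SAᵀ *ᵥ z) ⬝ᵥ ((fun _ => c) + SAᵀ *ᵥ z))
        + (C1 / 2) * (((fun _ => 1 + c) + SBᵀ *ᵥ z) ⬝ᵥ ((fun _ => 1 + c) + SBᵀ *ᵥ z))
        + (Cu / 2) * (((fun _ => -1 + eps - c) + (-SU)ᵀ *ᵥ z) ⬝ᵥ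
            ((fun _ => -1 + eps - c) + (-SU)ᵀ *ᵥ z))
        + (lam / 2) * ((V *ᵥ z) ⬝ᵥ (V *ᵥ z)) := by
  have hB : ((fun _ => 1) + SBᵀ *ᵥ z + fun _ => c) = (fun _ => 1 + c) + SBᵀ *ᵥ z := by
    funext i; simp only [Pi.add_apply]; ring
  have hU : ((fun _ => -1 + eps) - (SUᵀ *ᵥ z + fun _ => c)) =
      (fun _ => -1 + eps - c) + (-SU)ᵀ *ᵥ z := by
    funext i; simp only [transpose_neg, neg_mulVec, Pi.add_apply, Pi.sub_apply, Pi.neg_apply]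
    ring
  rw [minorityObj, hB, hU, add_comm (SAᵀ *ᵥ z)]

theorem minorityObj_smul (v : Fin d → ℝ) (c : ℝ) :
    ∃ a : ℝ, ∀ t : ℝ, minorityObj SA SB SU V C1 Cu lam eps (t • v) c =
      minorityObj SA SB SU V C1 Cu lam eps 0 c
        + t * (minorityGradAtZero SA SB SU C1 Cu eps c ⬝ᵥ v) + t ^ 2 * a := by
  refine ⟨(1 / 2) * ((SAᵀ *ᵥ v) ⬝ᵥ (SAᵀ *ᵥ v)) + (C1 / 2) * ((SBᵀ *ᵥ v) ⬝ᵥ (SBᵀ *ᵥ v))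
      + (Cu / 2) * (((-SU)ᵀ *ᵥ v) ⬝ᵥ ((-SU)ᵀ *ᵥ v)) + (lam / 2) * ((V *ᵥ v) ⬝ᵥ (V *ᵥ v)),
    fun t => ?_⟩
  rw [← zero_smul ℝ v, minorityObj_eq_const_add_mulVec, minorityObj_eq_const_add_mulVec]
  simp only [dotProduct_self_add_transpose_mulVec_smul]
  simp only [minorityGradAtZero, add_dotProduct, smul_dotProduct, smul_eq_mul, mulVec_smul,
    dotProduct_smul]
  ring

theorem minorityGradAtZero_eq_zero {c : ℝ}
    (hmin : ∀ z : Fin d → ℝ,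
      minorityObj SA SB SU V C1 Cu lam eps 0 c ≤ minorityObj SA SB SU V C1 Cu lam eps z c) :
    minorityGradAtZero SA SB SU C1 Cu eps c = 0 := by
  have horth : ∀ v, minorityGradAtZero SA SB SU C1 Cu eps c ⬝ᵥ v = 0 := fun v => by
    obtain ⟨a, ha⟩ := minorityObj_smul SA SB SU V C1 Cu lam eps v c
    refine eq_zero_of_forall_nonneg_mul_add_sq (a := a) fun t => ?_
    linarith [hmin (t • v), ha t]
  exact dotProduct_self_eq_zero.mp (horth _)

theorem minorityGradAtZero_eq_sum (c : ℝ) :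
    minorityGradAtZero SA SB SU C1 Cu eps c = ∑ i : Fin 3,
      ![c, C1 * (1 + c), Cu * (c + 1 - eps)] i •
        ![SA *ᵥ (fun _ => 1), SB *ᵥ (fun _ => 1), SU *ᵥ (fun _ => 1)] i := by
  simp only [minorityGradAtZero, Fin.sum_univ_three, mulVec_const _ c, mulVec_const _ (1 + c),
    mulVec_const _ (-1 + eps - c), neg_mulVec, cons_val_zero, cons_val_one, cons_val]
  module

end Minority

theorem minority_optimal_z_ne_zero_general {d mA mB mU k : ℕ}
    (SA : Matrix (Fin d) (Fin mA) ℝ) (SB : Matrix (Fin d) (Fin mB) ℝ)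
    (SU : Matrix (Fin d) (Fin mU) ℝ) (V : Matrix (Fin k) (Fin d) ℝ)
    (C1 Cu lam eps : ℝ) (hC1 : 0 < C1)
    (zs : Fin d → ℝ) (cs : ℝ)
    (hmin : ∀ (z : Fin d → ℝ) (c : ℝ),
      minorityObj SA SB SU V C1 Cu lam eps zs cs ≤ minorityObj SA SB SU V C1 Cu lam eps z c)
    (hli : LinearIndependent ℝ
      ![SA *ᵥ (fun _ => 1), SB *ᵥ (fun _ => 1), SU *ᵥ (fun _ => 1)]) :
    zs ≠ 0 := by
  rintro rfl
  have hgrad := minorityGradAtZero_eq_zero SA SB SU V C1 Cu lam eps fun z => hmin z cs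
  rw [minorityGradAtZero_eq_sum] at hgrad
  have hcoeff := Fintype.linearIndependent_iff.mp hli _ hgrad
  have hcs : cs = 0 := by simpa using hcoeff 0
  have h1 : C1 * (1 + cs) = 0 := by simpa using hcoeff 1
  rw [hcs, add_zero, mul_one] at h1
  exact hC1.ne' h1

/-- If `(z*, c*)` is an optimal solution of the minority-class reformulation and the
vectors `S_A e`, `S_B̃ e`, `S_Û e` are linearly independent, then `z* ≠ 0`. -/
theorem minority_optimal_z_ne_zero {d mA mB mU k : ℕ}
    (SA : Matrix (Fin d) (Fin mA) ℝ) (SB : Matrix (Fin d) (Fin mB) ℝ)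
    (SU : Matrix (Fin d) (Fin mU) ℝ) (V : Matrix (Fin k) (Fin d) ℝ)
    (C1 Cu lam eps : ℝ) (hC1 : 0 < C1) (hCu : 0 < Cu) (hlam : 0 < lam)
    (heps : eps ∈ Set.Ioo (0 : ℝ) 1)
    (zs : Fin d → ℝ) (cs : ℝ)
    (hmin : ∀ (z : Fin d → ℝ) (c : ℝ),
      minorityObj SA SB SU V C1 Cu lam eps zs cs ≤ minorityObj SA SB SU V C1 Cu lam eps z c)
    (hli : LinearIndependent ℝ
      ![SA *ᵥ (fun _ => 1), SB *ᵥ (fun _ => 1), SU *ᵥ (fun _ => 1)]) :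
    zs ≠ 0 :=
  minority_optimal_z_ne_zero_general SA SB SU V C1 Cu lam eps hC1 zs cs hmin hli
end
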